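/- Let f*_{A,i*} ∈ ℝ^d (i* ∈ {1,…,n_A*}) and f*_{B,j*} ∈ ℝ^d (j* ∈ {1,…,n_B*}) be fixed feature vectors, and let p_A, p_B be probability vectors on {1,…,n_A*} and {1,…,n_B*} with strictly positive entries. Let (ι_k)_{k≥1} and (κ_l)_{l≥1} be independent i.i.d. sequences with laws p_A and p_B, and for sample sizes n_A, n_B set f_{A,k} = f*_{A,ι_k} (k ≤ n_A) and f_{B,l} = f*_{B,κ_l} (l ≤ n_B). Let DS denote the dual-softmax assignment of the sampled features, DS_{k,l} = z_{k,l}² / ((Σ_{a=1}^{n_A} z_{a,l})·(Σ_{b=1}^{n_B} z_{k,b})) with z_{k,l} = exp(f_{A,k}ᵀ f_{B,l}), and let DS^{p_A,p_B} denote the reweighted dual-softmax assignment of the fixed features, DS^{p_A,p_B}_{i*,j*} = p_A(i*) p_B(j*) (z*_{i*,j*})² / ((Σ_{a=1}^{n_A*} p_A(a) z*_{a,j*})·(Σ_{b=1}^{n_B*} p_B(b) z*_{i*,b})) with z*_{i*,j*} = exp((f*_{A,i*})ᵀ f*_{B,j*}). Then for every i* ∈ {1,…,n_A*} and j* ∈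 {1,…,n_B*}, as n_A, n_B → ∞ jointly, Σ_{k ≤ n_A : ι_k = i*} Σ_{l ≤ n_B : κ_l = j*} DS_{k,l} → DS^{p_A,p_B}_{i*,j*} in probability. -/

import Mathlib

/-!
Restricted to the fibre `ι k = i*`, `κ l = j*`, every dual-softmax entry has the same value, and
its two row/column sums regroup by the sampled index; so the fibre sum is exactly the reweighted
dual-softmax of the fixed features with the sample counts as weights. The reweighted dual-softmax
is invariant under rescaling each weight vector, so the counts may be replaced by the empirical
frequencies. By the strong law of large numbers these converge almost surely, hence in
probability, to `pA` and `pB`, and the reweighted dual-softmax is continuous there (its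
denominators are positive), so the continuous mapping theorem concludes along the joint limit.
-/

open MeasureTheory Filter Finset ProbabilityTheory

noncomputable section

/-- `X` converges to `Y` in probability (w.r.t. the measure `P`) along the filter `l`. -/
def TendstoInProb {Ω : Type*} [MeasurableSpace Ω] (P : Measure Ω)
    {ι : Type*} (l : Filter ι) {E : Type*} [Dist E]
    (X : ι → Ω → E) (Y : Ω → E) : Prop :=
  ∀ ε : ℝ, 0 < ε → Tendsto (fun n => P {ω | ε < dist (X n ω) (Y ω)}) l (nhds 0)

open scoped Topology

section DualSoftmax

variable {α β : Type*}

def dualSoftmax (z : ℕ → ℕ → ℝ) (n m k l : ℕ) : ℝ :=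
  z k l ^ 2 / ((∑ a ∈ range n, z a l) * (∑ b ∈ range m, z k b))

def reweightedDualSoftmax [Fintype α] [Fintype β] (z : α → β → ℝ) (p : α → ℝ) (q : β → ℝ)
    (i : α) (j : β) : ℝ :=
  p i * q j * z i j ^ 2 / ((∑ a, p a * z a j) * (∑ b, q b * z i b))

def sampleCount [DecidableEq α] (x : ℕ → α) (n : ℕ) (i : α) : ℝ := #{k ∈ range n | x k = i}

def empiricalFreq [DecidableEq α] (x : ℕ → α) (n : ℕ) : α → ℝ := (n : ℝ)⁻¹ • sampleCount x n

theorem sum_range_comp_eq_sum_sampleCount_mul [Fintype α] [DecidableEq α] (x : ℕ → α) (n : ℕ)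
    (F : α → ℝ) : ∑ k ∈ range n, F (x k) = ∑ i, sampleCount x n i * F i := by
  rw [← sum_fiberwise' (range n) x F]
  simp [sampleCount, sum_const, nsmul_eq_mul]

theorem sum_dualSoftmax_fiber [Fintype α] [Fintype β] [DecidableEq α] [DecidableEq β]
    (z : α → β → ℝ) (x : ℕ → α) (y : ℕ → β) (n m : ℕ) (i : α) (j : β) :
    ∑ k ∈ range n, ∑ l ∈ range m,
        (if x k = i ∧ y l = j then dualSoftmax (fun k l => z (x k) (y l)) n m k l else 0) =
      reweightedDualSoftmax z (sampleCount x n) (sampleCount y m) i j := by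
  set C := z i j ^ 2 / ((∑ a ∈ range n, z (x a) j) * (∑ b ∈ range m, z i (y b))) with hC
  have hterm : ∀ k l, (if x k = i ∧ y l = j then dualSoftmax (fun k l => z (x k) (y l)) n m k l
      else 0) = (if x k = i then 1 else 0) * (if y l = j then 1 else 0) * C := by
    intro k l
    by_cases hx : x k = i <;> by_cases hy : y l = j <;> simp [hx, hy, dualSoftmax, C]
  simp_rw [hterm, ← sum_mul, ← sum_mul_sum, ← natCast_card_filter]
  rw [hC, sum_range_comp_eq_sum_sampleCount_mul x n (z · j),
    sum_range_comp_eq_sum_sampleCount_mul y m (z i ·), reweightedDualSoftmax, mul_div_assoc]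
  rfl

theorem reweightedDualSoftmax_smul [Fintype α] [Fintype β] (z : α → β → ℝ) (p : α → ℝ)
    (q : β → ℝ) {c d : ℝ} (hc : c ≠ 0) (hd : d ≠ 0) (i : α) (j : β) :
    reweightedDualSoftmax z (c • p) (d • q) i j = reweightedDualSoftmax z p q i j := by
  unfold reweightedDualSoftmax
  simp only [Pi.smul_apply, smul_eq_mul, mul_assoc, ← mul_sum]
  conv_rhs => rw [← mul_div_mul_left _ _ (mul_ne_zero hc hd)]
  congr 1 <;> ring

theorem sum_dualSoftmax_fiber_eq_empiricalFreq [Fintype α] [Fintype β] [DecidableEq α]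
    [DecidableEq β] (z : α → β → ℝ) (x : ℕ → α) (y : ℕ → β) (n m : ℕ) (i : α) (j : β) :
    ∑ k ∈ range n, ∑ l ∈ range m,
        (if x k = i ∧ y l = j then dualSoftmax (fun k l => z (x k) (y l)) n m k l else 0) =
      reweightedDualSoftmax z (empiricalFreq x n) (empiricalFreq y m) i j := by
  -- for an empty sample both sides vanish, as `empiricalFreq x 0 = (0 : ℝ)⁻¹ • 0 = 0`
  rcases eq_or_ne n 0 with rfl | hn
  · simp [reweightedDualSoftmax, empiricalFreq]
  rcases eq_or_ne m 0 with rfl | hm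
  · simp [reweightedDualSoftmax, empiricalFreq]
  rw [sum_dualSoftmax_fiber, empiricalFreq, empiricalFreq,
    reweightedDualSoftmax_smul _ _ _ (by positivity) (by positivity)]

theorem continuousAt_reweightedDualSoftmax [Fintype α] [Fintype β] (z : α → β → ℝ) {p : α → ℝ}
    {q : β → ℝ} {i : α} {j : β} (hp : ∑ a, p a * z a j ≠ 0) (hq : ∑ b, q b * z i b ≠ 0) :
    ContinuousAt (fun pq : (α → ℝ) × (β → ℝ) => reweightedDualSoftmax z pq.1 pq.2 i j) (p, q) :=
  ContinuousAt.div (by fun_prop) (by fun_prop) (mul_ne_zero hp hq)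

end DualSoftmax

section Probability

variable {Ω : Type*} [MeasurableSpace Ω] {P : Measure Ω}

theorem MeasureTheory.TendstoInMeasure.tendstoInProb {ι E : Type*} [PseudoMetricSpace E]
    {l : Filter ι} {X : ι → Ω → E} {Y : Ω → E} (h : TendstoInMeasure P X l Y) :
    TendstoInProb P l X Y := by
  intro ε hε
  refine tendsto_of_tendsto_of_tendsto_of_le_of_le tendsto_const_nhds
    (tendstoInMeasure_iff_dist.mp h ε hε) (fun _ => zero_le) fun n => ?_
  exact measure_mono (Set.ofPred_subset_ofPred.mpr fun _ => le_of_lt)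

theorem MeasureTheory.TendstoInMeasure.prodMk {ι κ E F : Type*} [PseudoEMetricSpace E]
    [PseudoEMetricSpace F] {l : Filter ι} {l' : Filter κ} {X : ι → Ω → E} {Y : κ → Ω → F}
    {g : Ω → E} {h : Ω → F}
    (hX : TendstoInMeasure P X l g) (hY : TendstoInMeasure P Y l' h) :
    TendstoInMeasure P (fun nm ω => (X nm.1 ω, Y nm.2 ω)) (l ×ˢ l') fun ω => (g ω, h ω) := by
  intro ε hε
  have hsum := ((hX ε hε).comp tendsto_fst).add ((hY ε hε).comp tendsto_snd)
  rw [add_zero] at hsum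
  refine tendsto_of_tendsto_of_tendsto_of_le_of_le tendsto_const_nhds hsum (fun _ => zero_le)
    fun nm => (measure_mono fun ω hω => ?_).trans (measure_union_le _ _)
  simpa only [Set.mem_ofPred_eq, Prod.edist_eq, le_max_iff, Set.mem_union] using hω

theorem MeasureTheory.TendstoInMeasure.continuousAt_comp {ι E F : Type*} [PseudoMetricSpace E]
    [PseudoMetricSpace F] {l : Filter ι} {X : ι → Ω → E} {c : E} {G : E → F}
    (hX : TendstoInMeasure P X l fun _ => c) (hG : ContinuousAt G c) :
    TendstoInMeasure P (fun n ω => G (X n ω)) l fun _ => G c := by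
  rw [tendstoInMeasure_iff_dist] at hX ⊢
  intro ε hε
  obtain ⟨δ, hδ, hGδ⟩ := Metric.continuousAt_iff.mp hG ε hε
  refine tendsto_of_tendsto_of_tendsto_of_le_of_le tendsto_const_nhds (hX δ hδ)
    (fun _ => zero_le) fun n => measure_mono fun ω hω => ?_
  exact le_of_not_gt fun hnear => (hGδ hnear).not_ge hω

variable {α : Type*} [DecidableEq α] [MeasurableSpace α] [MeasurableSingletonClass α]

theorem measurable_empiricalFreq [Fintype α] {X : ℕ → Ω → α} (hX : ∀ k, Measurable (X k))
    (n : ℕ) : Measurable fun ω => empiricalFreq (X · ω) n := by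
  refine measurable_pi_iff.mpr fun i => Measurable.const_mul ?_ _
  simp only [sampleCount, natCast_card_filter]
  exact Finset.measurable_sum _ fun k _ =>
    Measurable.ite (hX k (measurableSet_singleton i)) measurable_const measurable_const

theorem ae_tendsto_empiricalFreq [IsFiniteMeasure P] {X : ℕ → Ω → α} (hX : ∀ k, Measurable (X k))
    (hindep : iIndepFun X P) (hident : ∀ k, IdentDistrib (X k) (X 0) P P) (i : α) :
    ∀ᵐ ω ∂P, Tendsto (fun n => empiricalFreq (X · ω) n i) atTop (𝓝 (P.real (X 0 ⁻¹' {i}))) := by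
  set f : α → ℝ := fun a => if a = i then 1 else 0
  have hf : Measurable f :=
    Measurable.ite (measurableSet_singleton i) measurable_const measurable_const
  have hfX : f ∘ X 0 = (X 0 ⁻¹' {i}).indicator 1 := by
    ext ω
    by_cases h : X 0 ω = i <;> simp [f, h]
  have hs : MeasurableSet (X 0 ⁻¹' {i}) := hX 0 (measurableSet_singleton i)
  have hlaw := strong_law_ae_real (fun k => f ∘ X k)
    (hfX ▸ (integrable_const (1 : ℝ)).indicator hs)
    (fun k l hkl => (hindep.comp (fun _ => f) fun _ => hf).indepFun hkl)
    fun k => (hident k).comp hf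
  rw [hfX, integral_indicator_one hs] at hlaw
  filter_upwards [hlaw] with ω hω
  refine hω.congr fun n => ?_
  simp only [empiricalFreq, sampleCount, natCast_card_filter, Pi.smul_apply, smul_eq_mul,
    inv_mul_eq_div]
  rfl

theorem tendstoInMeasure_empiricalFreq [IsFiniteMeasure P] [Fintype α] {X : ℕ → Ω → α}
    (hX : ∀ k, Measurable (X k)) (hindep : iIndepFun X P) {p : α → ℝ} (hp : ∀ i, 0 ≤ p i)
    (hlaw : ∀ k i, P {ω | X k ω = i} = ENNReal.ofReal (p i)) :
    TendstoInMeasure P (fun n ω => empiricalFreq (X · ω) n) atTop fun _ => p := by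
  have hident : ∀ k, IdentDistrib (X k) (X 0) P P := fun k =>
    ⟨(hX k).aemeasurable, (hX 0).aemeasurable, Measure.ext_of_singleton fun i => by
      rw [Measure.map_apply (hX k) (measurableSet_singleton i),
        Measure.map_apply (hX 0) (measurableSet_singleton i)]
      exact (hlaw k i).trans (hlaw 0 i).symm⟩
  have hmean : ∀ i, P.real (X 0 ⁻¹' {i}) = p i := fun i =>
    (congrArg ENNReal.toReal (hlaw 0 i)).trans (ENNReal.toReal_ofReal (hp i))
  refine tendstoInMeasure_of_tendsto_ae
    (fun n => (measurable_empiricalFreq hX n).aestronglyMeasurable) ?_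
  filter_upwards [ae_all_iff.mpr fun i => ae_tendsto_empiricalFreq hX hindep hident i] with ω hω
  exact tendsto_pi_nhds.mpr fun i => hmean i ▸ hω i

end Probability

theorem reweighted_dual_softmax_asymptotic_general
    {Ω : Type*} [MeasurableSpace Ω] (P : Measure Ω) [IsProbabilityMeasure P]
    (d nAs nBs : ℕ) (fAstar : Fin nAs → Fin d → ℝ) (fBstar : Fin nBs → Fin d → ℝ)
    (pA : Fin nAs → ℝ) (pB : Fin nBs → ℝ)
    (hpA_pos : ∀ i, 0 < pA i) (hpB_pos : ∀ j, 0 < pB j)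
    (ι : ℕ → Ω → Fin nAs) (κ : ℕ → Ω → Fin nBs)
    (hι_meas : ∀ k, Measurable (ι k)) (hκ_meas : ∀ l, Measurable (κ l))
    -- each `ι k` has law `pA`, each `κ l` has law `pB`
    (hι_law : ∀ k i, P {ω | ι k ω = i} = ENNReal.ofReal (pA i))
    (hκ_law : ∀ l j, P {ω | κ l ω = j} = ENNReal.ofReal (pB j))
    -- each sequence is independent, and the two sequences are independent of each other
    (hι_indep : iIndepFun ι P)
    (hκ_indep : iIndepFun κ P) :
    ∀ (istar : Fin nAs) (jstar : Fin nBs),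
      TendstoInProb P (atTop : Filter (ℕ × ℕ))
        (fun nAB ω =>
          ∑ k ∈ Finset.range nAB.1, ∑ l ∈ Finset.range nAB.2,
            if ι k ω = istar ∧ κ l ω = jstar then
              (Real.exp (∑ a, fAstar (ι k ω) a * fBstar (κ l ω) a)) ^ 2 /
                ((∑ k' ∈ Finset.range nAB.1,
                    Real.exp (∑ a, fAstar (ι k' ω) a * fBstar (κ l ω) a)) *
                  (∑ l' ∈ Finset.range nAB.2,
                    Real.exp (∑ a, fAstar (ι k ω) a * fBstar (κ l' ω) a)))
            else 0)
        (fun _ =>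
          pA istar * pB jstar * (Real.exp (∑ a, fAstar istar a * fBstar jstar a)) ^ 2 /
            ((∑ i, pA i * Real.exp (∑ a, fAstar i a * fBstar jstar a)) *
              (∑ j, pB j * Real.exp (∑ a, fAstar istar a * fBstar j a)))) := by
  intro istar jstar
  set z : Fin nAs → Fin nBs → ℝ := fun i j => Real.exp (∑ a, fAstar i a * fBstar j a)
  have hA : ∑ i, pA i * z i jstar ≠ 0 :=
    (sum_pos (fun i _ => mul_pos (hpA_pos i) (Real.exp_pos _)) ⟨istar, mem_univ _⟩).ne'
  have hB : ∑ j, pB j * z istar j ≠ 0 :=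
    (sum_pos (fun j _ => mul_pos (hpB_pos j) (Real.exp_pos _)) ⟨jstar, mem_univ _⟩).ne'
  have hfreq :=
    ((tendstoInMeasure_empiricalFreq hι_meas hι_indep (fun i => (hpA_pos i).le) hι_law).prodMk
      (tendstoInMeasure_empiricalFreq hκ_meas hκ_indep (fun j => (hpB_pos j).le) hκ_law)
      ).continuousAt_comp (continuousAt_reweightedDualSoftmax z hA hB)
  rw [prod_atTop_atTop_eq] at hfreq
  convert hfreq.tendstoInProb using 3 with nAB ω
  · exact sum_dualSoftmax_fiber_eq_empiricalFreq z _ _ _ _ _ _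
  · rfl

/-- asymptotic equivalence of dual-softmax matching on i.i.d. sampled features
and reweighted dual-softmax on the fixed features.  Samples `k ∈ {1,…,n_A}` are modelled as
`k ∈ Finset.range n_A` (0-based), with `f_{A,k} = fAstar (ι k)` and `f_{B,l} = fBstar (κ l)`. -/
theorem reweighted_dual_softmax_asymptotic
    {Ω : Type*} [MeasurableSpace Ω] (P : Measure Ω) [IsProbabilityMeasure P]
    (d nAs nBs : ℕ) (hd : 0 < d) (hnAs : 0 < nAs) (hnBs : 0 < nBs)
    (fAstar : Fin nAs → Fin d → ℝ) (fBstar : Fin nBs → Fin d → ℝ)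
    (pA : Fin nAs → ℝ) (pB : Fin nBs → ℝ)
    (hpA_pos : ∀ i, 0 < pA i) (hpA_sum : ∑ i, pA i = 1)
    (hpB_pos : ∀ j, 0 < pB j) (hpB_sum : ∑ j, pB j = 1)
    (ι : ℕ → Ω → Fin nAs) (κ : ℕ → Ω → Fin nBs)
    (hι_meas : ∀ k, Measurable (ι k)) (hκ_meas : ∀ l, Measurable (κ l))
    -- each `ι k` has law `pA`, each `κ l` has law `pB`
    (hι_law : ∀ k i, P {ω | ι k ω = i} = ENNReal.ofReal (pA i))
    (hκ_law : ∀ l j, P {ω | κ l ω = j} = ENNReal.ofReal (pB j))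
    -- each sequence is independent, and the two sequences are independent of each other
    (hι_indep : iIndepFun ι P)
    (hκ_indep : iIndepFun κ P)
    (h_cross : IndepFun (fun ω k => ι k ω) (fun ω l => κ l ω) P) :
    ∀ (istar : Fin nAs) (jstar : Fin nBs),
      TendstoInProb P (atTop : Filter (ℕ × ℕ))
        (fun nAB ω =>
          ∑ k ∈ Finset.range nAB.1, ∑ l ∈ Finset.range nAB.2,
            if ι k ω = istar ∧ κ l ω = jstar then
              (Real.exp (∑ a, fAstar (ι k ω) a * fBstar (κ l ω) a)) ^ 2 /
                ((∑ k' ∈ Finset.range nAB.1,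
                    Real.exp (∑ a, fAstar (ι k' ω) a * fBstar (κ l ω) a)) *
                  (∑ l' ∈ Finset.range nAB.2,
                    Real.exp (∑ a, fAstar (ι k ω) a * fBstar (κ l' ω) a)))
            else 0)
        (fun _ =>
          pA istar * pB jstar * (Real.exp (∑ a, fAstar istar a * fBstar jstar a)) ^ 2 /
            ((∑ i, pA i * Real.exp (∑ a, fAstar i a * fBstar jstar a)) *
              (∑ j, pB j * Real.exp (∑ a, fAstar istar a * fBstar j a)))) :=
  reweighted_dual_softmax_asymptotic_general P d nAs nBs fAstar fBstar pA pB hpA_pos hpB_pos ι κ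
    hι_meas hκ_meas hι_law hκ_law hι_indep hκ_indep

end
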